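/- Let n and k be odd natural numbers with 0 ≤ k, l < n. Then there exists a simple graph on n vertices in which exactly n-1 vertices have degree k and exactly one vertex has degree l, if and only if l is even. -/

import Mathlib

/-- The degree of vertex `v` in `g`. -/
noncomputable def dkDeg {n : ℕ} (g : SimpleGraph (Fin n)) (v : Fin n) : ℕ :=
  Nat.card (g.neighborSet v)

/-- `n_k(g)`: the number of vertices of `g` of degree `k`. -/
noncomputable def dkNk {n : ℕ} (g : SimpleGraph (Fin n)) (k : ℕ) : ℕ :=
  Nat.card {v : Fin n // dkDeg g v = k}

/-!
Necessity is the handshake lemma: if `l` were odd, all `n` vertices would have odd degree, while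
`n` is odd. For sufficiency write `n = 2h + 1`, `k = 2r + 1`, `l = 2c`. The circulant graph on
`ZMod (2h)` with jumps `h - r, …, h + r` is `k`-regular and contains the antipodal perfect
matching `a — a + h`. Deleting `c` edges of this matching and joining a new vertex to their `2c`
endpoints keeps every old vertex at degree `k` and gives the new one degree `l`.
-/

open Function Set

namespace SimpleGraph

variable {V : Type*}

def apexGraph (H : SimpleGraph V) (σ : V → V) (S : Set V) : SimpleGraph (Option V) where
  Adj
    | some a, some b => H.Adj a b ∧ ¬(a ∈ S ∧ b = σ a) ∧ ¬(b ∈ S ∧ a = σ b)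
    | some a, none | none, some a => a ∈ S
    | none, none => False
  symm := ⟨by
    rintro (_ | a) (_ | b) h
    exacts [h, h, h, ⟨h.1.symm, h.2.2, h.2.1⟩]⟩
  loopless := ⟨by
    rintro (_ | a) h
    exacts [h, h.1.ne rfl]⟩

variable {H : SimpleGraph V} {σ : V → V} {S : Set V}

lemma neighborSet_apexGraph_none : (H.apexGraph σ S).neighborSet none = some '' S := by
  ext (_ | b) <;> simp [apexGraph]

lemma neighborSet_apexGraph_some_of_mem (hσ : Involutive σ) {a : V} (ha : a ∈ S) :
    (H.apexGraph σ S).neighborSet (some a) = insert none (some '' (H.neighborSet a \ {σ a})) := by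
  ext (_ | b)
  · simpa [apexGraph]
  · simp only [mem_neighborSet, apexGraph, mem_insert_iff, reduceCtorEq, false_or,
      mem_image, Option.some.injEq, exists_eq_right, mem_sdiff, mem_singleton_iff]
    constructor
    · rintro ⟨hab, hb, -⟩
      exact ⟨hab, fun h => hb ⟨ha, h⟩⟩
    · rintro ⟨hab, hb⟩
      exact ⟨hab, fun h => hb h.2, fun h => hb (h.2 ▸ (hσ b).symm)⟩

lemma neighborSet_apexGraph_some_of_notMem (hS : ∀ b ∈ S, σ b ∈ S) {a : V} (ha : a ∉ S) :
    (H.apexGraph σ S).neighborSet (some a) = some '' H.neighborSet a := by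
  ext (_ | b)
  · simpa [apexGraph]
  · simp only [mem_neighborSet, apexGraph, mem_image, Option.some.injEq, exists_eq_right]
    exact ⟨fun h => h.1, fun hab => ⟨hab, fun h => ha h.1, fun h => ha (h.2 ▸ hS b h.1)⟩⟩

theorem ncard_neighborSet_apexGraph_some (hσ : Involutive σ) (hS : ∀ b ∈ S, σ b ∈ S)
    (hadj : ∀ a ∈ S, H.Adj a (σ a)) {a : V} (hfin : (H.neighborSet a).Finite) :
    ((H.apexGraph σ S).neighborSet (some a)).ncard = (H.neighborSet a).ncard := by
  by_cases ha : a ∈ S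
  · rw [neighborSet_apexGraph_some_of_mem hσ ha,
      ncard_insert_of_notMem (by simp) (hfin.sdiff.image _),
      ncard_image_of_injective _ (Option.some_injective _),
      ncard_sdiff_singleton_add_one (show σ a ∈ H.neighborSet a from hadj a ha) hfin]
  · rw [neighborSet_apexGraph_some_of_notMem hS ha,
      ncard_image_of_injective _ (Option.some_injective _)]

theorem ncard_neighborSet_apexGraph_none :
    ((H.apexGraph σ S).neighborSet none).ncard = S.ncard := by
  rw [neighborSet_apexGraph_none, ncard_image_of_injective _ (Option.some_injective _)]

theorem neighborSet_circulantGraph {G : Type*} [AddGroup G] {s : Set G}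
    (hs : ∀ x ∈ s, -x ∈ s) (hs₀ : 0 ∉ s) (v : G) :
    (circulantGraph s).neighborSet v = (· + v) '' s := by
  ext w
  simp only [mem_neighborSet, circulantGraph_adj, mem_image]
  constructor
  · rintro ⟨-, h | h⟩
    · exact ⟨w - v, by simpa using hs _ h, sub_add_cancel w v⟩
    · exact ⟨w - v, h, sub_add_cancel w v⟩
  · rintro ⟨d, hd, rfl⟩
    refine ⟨fun h => hs₀ ?_, Or.inr (by simpa using hd)⟩
    obtain rfl : d = 0 := by simpa using congrArg (· - v) h.symm
    exact hd

end SimpleGraph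

namespace ZMod

lemma ncard_natCast_image {m : ℕ} {A : Set ℕ} (hA : ∀ i ∈ A, i < m) :
    ((Nat.cast : ℕ → ZMod m) '' A).ncard = A.ncard :=
  InjOn.ncard_image fun i hi j hj hij => by
    simpa [val_cast_of_lt (hA i hi), val_cast_of_lt (hA j hj)] using congrArg val hij

variable {h : ℕ}

lemma natCast_add_self_eq_zero : (h : ZMod (2 * h)) + h = 0 := by
  rw [← Nat.cast_add, ← two_mul, natCast_self]

lemma involutive_add_natCast : Involutive (· + (h : ZMod (2 * h))) := fun a => by
  simp only [add_assoc, natCast_add_self_eq_zero, add_zero]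

def antipodalJumps (h r : ℕ) : Set (ZMod (2 * h)) := Nat.cast '' Icc (h - r) (h + r)

variable {r : ℕ}

lemma neg_mem_antipodalJumps (hr : r ≤ h) {x : ZMod (2 * h)} (hx : x ∈ antipodalJumps h r) :
    -x ∈ antipodalJumps h r := by
  obtain ⟨i, hi, rfl⟩ := hx
  simp only [mem_Icc] at hi
  refine ⟨2 * h - i, by simp only [mem_Icc]; omega, ?_⟩
  rw [Nat.cast_sub (by omega), natCast_self, zero_sub]

lemma zero_notMem_antipodalJumps (hr : r < h) : 0 ∉ antipodalJumps h r := by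
  rintro ⟨i, hi, hi0⟩
  simp only [mem_Icc] at hi
  rw [natCast_eq_zero_iff] at hi0
  exact absurd (Nat.le_of_dvd (by omega) hi0) (by omega)

lemma natCast_mem_antipodalJumps : (h : ZMod (2 * h)) ∈ antipodalJumps h r :=
  ⟨h, by simp only [mem_Icc]; omega, rfl⟩

lemma ncard_antipodalJumps (hr : r < h) : (antipodalJumps h r).ncard = 2 * r + 1 := by
  rw [antipodalJumps, ncard_natCast_image fun i hi => by simp only [mem_Icc] at hi; omega,
    ncard_Icc_nat]
  omega

/-- The union of the antipodal pairs `{i, i + h}` with `i < c`. -/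
def antipodalPairs (h c : ℕ) : Set (ZMod (2 * h)) := Nat.cast '' (Iio c ∪ Ico h (h + c))

variable {c : ℕ}

lemma add_natCast_mem_antipodalPairs {a : ZMod (2 * h)}
    (ha : a ∈ antipodalPairs h c) : a + h ∈ antipodalPairs h c := by
  obtain ⟨i, hi | hi, rfl⟩ := ha
  · exact ⟨i + h, Or.inr (by simp only [mem_Iio, mem_Ico] at hi ⊢; omega), Nat.cast_add i h⟩
  · simp only [mem_Ico] at hi
    refine ⟨i - h, Or.inl (by simp only [mem_Iio]; omega), ?_⟩
    rw [Nat.cast_sub hi.1]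
    linear_combination -natCast_add_self_eq_zero (h := h)

lemma ncard_antipodalPairs (hc : c ≤ h) : (antipodalPairs h c).ncard = 2 * c := by
  have hdisj : Disjoint (Iio c) (Ico h (h + c)) :=
    disjoint_left.mpr fun i hi hi' => by simp only [mem_Iio, mem_Ico] at hi hi'; omega
  rw [antipodalPairs, ncard_natCast_image fun i hi => by
      simp only [mem_union, mem_Iio, mem_Ico] at hi; omega,
    ncard_union_eq hdisj, ncard_Iio_nat, ncard_Ico_nat]
  omega

end ZMod

open SimpleGraph ZMod in
theorem exists_option_zmod_degrees (h r c : ℕ) (hr : r < h) (hc : c ≤ h) :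
    ∃ G : SimpleGraph (Option (ZMod (2 * h))),
      (∀ a, Nat.card (G.neighborSet (some a)) = 2 * r + 1) ∧
        Nat.card (G.neighborSet none) = 2 * c := by
  have : NeZero (2 * h) := ⟨by omega⟩
  have hnbr := neighborSet_circulantGraph (fun _ => neg_mem_antipodalJumps hr.le)
    (zero_notMem_antipodalJumps hr)
  have hadj (a : ZMod (2 * h)) : (circulantGraph (antipodalJumps h r)).Adj a (a + h) := by
    rw [← mem_neighborSet, hnbr]
    exact ⟨h, natCast_mem_antipodalJumps, add_comm _ _⟩
  refine ⟨(circulantGraph (antipodalJumps h r)).apexGraph (· + (h : ZMod (2 * h)))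
    (antipodalPairs h c), fun a => ?_, ?_⟩
  · rw [Nat.card_coe_set_eq, ncard_neighborSet_apexGraph_some involutive_add_natCast
      (fun _ => add_natCast_mem_antipodalPairs) (fun a _ => hadj a) (toFinite _), hnbr,
      ncard_image_of_injective _ (add_left_injective a), ncard_antipodalJumps hr]
  · rw [Nat.card_coe_set_eq, ncard_neighborSet_apexGraph_none, ncard_antipodalPairs hc]

lemma dkDeg_comap_equiv {n : ℕ} {W : Type*} (G : SimpleGraph W) (e : Fin n ≃ W) (v : Fin n) :
    dkDeg (G.comap e) v = Nat.card (G.neighborSet (e v)) :=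
  Nat.card_congr ((SimpleGraph.Iso.comap e G).mapNeighborSet v)

lemma dkNk_comap_equiv {n : ℕ} {W : Type*} (G : SimpleGraph W) (e : Fin n ≃ W) (k : ℕ) :
    dkNk (G.comap e) k = Nat.card {w // Nat.card (G.neighborSet w) = k} :=
  Nat.card_congr (e.subtypeEquiv fun v => by rw [dkDeg_comap_equiv])

theorem exists_dkNk_of_option {n k l : ℕ} {W : Type*} [Finite W] (G : SimpleGraph (Option W))
    (hn : Nat.card W + 1 = n) (hk : ∀ a, Nat.card (G.neighborSet (some a)) = k)
    (hl : Nat.card (G.neighborSet none) = l) (hkl : k ≠ l) :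
    ∃ g : SimpleGraph (Fin n), dkNk g k = n - 1 ∧ dkNk g l = 1 := by
  let e : Fin n ≃ Option W := (Finite.equivFinOfCardEq (by rw [Finite.card_option, hn])).symm
  refine ⟨G.comap e, ?_, ?_⟩
  · rw [dkNk_comap_equiv, ← hn, Nat.add_sub_cancel,
      ← Nat.card_congr (Equiv.optionIsSomeEquiv W)]
    refine Nat.card_congr (Equiv.subtypeEquivRight fun w => ?_)
    cases w <;> simp [hk, hl, hkl.symm]
  · rw [dkNk_comap_equiv, ← Nat.card_unique (α := {w : Option W // w = none})]
    refine Nat.card_congr (Equiv.subtypeEquivRight fun w => ?_)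
    cases w <;> simp [hk, hl, hkl]

lemma dkDeg_eq_degree {n : ℕ} (g : SimpleGraph (Fin n)) [DecidableRel g.Adj] (v : Fin n) :
    dkDeg g v = g.degree v := by
  rw [dkDeg, Nat.card_eq_fintype_card, SimpleGraph.card_neighborSet_eq_degree]

lemma dkDeg_eq_or_eq_of_dkNk {n k l : ℕ} {g : SimpleGraph (Fin n)} (hkl : k ≠ l)
    (hk : dkNk g k = n - 1) (hl : dkNk g l = 1) (v : Fin n) : dkDeg g v = k ∨ dkDeg g v = l := by
  classical
  have hcard (j : ℕ) : dkNk g j = (Finset.univ.filter fun v => dkDeg g v = j).card := by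
    rw [dkNk, Nat.card_eq_fintype_card, Fintype.card_subtype]
  have hcover : (Finset.univ.filter fun v => dkDeg g v = k) ∪
      (Finset.univ.filter fun v => dkDeg g v = l) = Finset.univ := by
    refine Finset.eq_univ_of_card _ (le_antisymm (Finset.card_le_univ _) ?_)
    rw [Finset.card_union_of_disjoint
        (Finset.disjoint_filter.mpr fun _ _ h h' => hkl (h.symm.trans h')),
      ← hcard, ← hcard, hk, hl, Fintype.card_fin]
    omega
  simpa using hcover.ge (Finset.mem_univ v)

theorem even_of_dkNk {n k l : ℕ} (hn : Odd n) (hk : Odd k) (hkl : k ≠ l)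
    {g : SimpleGraph (Fin n)} (hgk : dkNk g k = n - 1) (hgl : dkNk g l = 1) : Even l := by
  classical
  by_contra hl
  have hodd : ∀ v, Odd (g.degree v) := fun v => by
    rw [← dkDeg_eq_degree]
    rcases dkDeg_eq_or_eq_of_dkNk hkl hgk hgl v with h | h <;> rw [h]
    exacts [hk, Nat.not_even_iff_odd.mp hl]
  have := g.even_card_odd_degree_vertices
  rw [Finset.filter_true_of_mem fun v _ => hodd v, Finset.card_univ, Fintype.card_fin] at this
  exact Nat.not_even_iff_odd.mpr hn this

/-- for `n`, `k` odd, `k ≠ l`, `k, l < n`, there exists a simple graph on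
`n` vertices with exactly `n-1` vertices of degree `k` and one vertex of degree `l`
iff `l` is even. -/
theorem stmt3 (n k l : ℕ) (hn : Odd n) (hk : Odd k) (hkl : k ≠ l)
    (hkn : k < n) (hln : l < n) :
    (∃ g : SimpleGraph (Fin n), dkNk g k = n - 1 ∧ dkNk g l = 1) ↔ Even l := by
  refine ⟨fun ⟨g, hgk, hgl⟩ => even_of_dkNk hn hk hkl hgk hgl, fun hl => ?_⟩
  obtain ⟨h, rfl⟩ := hn
  obtain ⟨r, rfl⟩ := hk
  obtain ⟨c, rfl⟩ := hl.two_dvd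
  have : NeZero (2 * h) := ⟨by omega⟩
  obtain ⟨G, hGk, hGl⟩ := exists_option_zmod_degrees h r c (by omega) (by omega)
  exact exists_dkNk_of_option G (by rw [Nat.card_zmod]) hGk hGl hkl
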